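/- arXiv:2209.12367 — 4 statements merged into one kernel-verified Lean document; each statement's English description precedes it below -/
import Mathlib

section
/- Let G be a connected graph with principal eigenvector x, and let u, u', v, v' be four distinct vertices with uv' ∈ E(G), u'v ∈ E(G), uv ∉ E(G), u'v' ∉ E(G). If x_u ≥ x_{u'} and x_v ≥ x_{v'}, then the graph G' = G + uv + u'v' − uv' − u'v satisfies λ₁(G') ≥ λ₁(G). -/
/-!
Evaluate the Rayleigh quotient of `G'` at the principal eigenvector `x` of `G`. Summing
`x a * x b` over edges, the switch changes `xᵀ A x` by
`2 (x u x v + x u' x v' - x u x v' - x u' x v) = 2 (x u - x u') (x v - x v') ≥ 0`,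
while `yᵀ A(G') y ≤ λ₁(G') ‖y‖²` because `A(G') ≤ λ₁(G') • 1` in the Loewner order.
-/

open Finset Matrix

/-- The spectral radius (largest adjacency eigenvalue) of a finite simple graph. -/
noncomputable def lam1 {V : Type*} [Fintype V] [DecidableEq V] (G : SimpleGraph V) : ℝ := by
  classical
  exact sSup {μ : ℝ | Module.End.HasEigenvalue (Matrix.toLin' (G.adjMatrix ℝ)) μ}

open scoped MatrixOrder

theorem Matrix.IsHermitian.dotProduct_mulVec_le_of_spectrum_le {n : Type*} [Fintype n]
    [DecidableEq n] {A : Matrix n n ℝ} (hA : A.IsHermitian) {r : ℝ} (hr : ∀ μ ∈ spectrum ℝ A, μ ≤ r)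
    (y : n → ℝ) : y ⬝ᵥ (A *ᵥ y) ≤ r * (y ⬝ᵥ y) := by
  have hAr : A ≤ algebraMap ℝ (Matrix n n ℝ) r :=
    le_algebraMap_of_spectrum_le hr hA.isSelfAdjoint
  simpa [Algebra.algebraMap_eq_smul_one, sub_mulVec, dotProduct_sub, smul_mulVec,
    dotProduct_smul] using (Matrix.le_iff.mp hAr).dotProduct_mulVec_nonneg y

def Sym2.mulEnds {α R : Type*} [CommMagma R] (x : α → R) : Sym2 α → R :=
  Sym2.lift ⟨fun a b ↦ x a * x b, fun _ _ ↦ mul_comm _ _⟩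

@[simp]
theorem Sym2.mulEnds_mk {α R : Type*} [CommMagma R] (x : α → R) (a b : α) :
    Sym2.mulEnds x s(a, b) = x a * x b := rfl

namespace SimpleGraph

variable {V : Type*}

theorem edgeFinset_fromEdgeSet_union_sdiff [DecidableEq V] (G : SimpleGraph V)
    [Fintype G.edgeSet] {A B : Finset (Sym2 V)} (hA : ∀ e ∈ A, ¬e.IsDiag) (hAB : Disjoint A B)
    [Fintype (fromEdgeSet ((G.edgeSet ∪ A) \ B)).edgeSet] :
    (fromEdgeSet ((G.edgeSet ∪ A) \ B)).edgeFinset = G.edgeFinset \ B ∪ A := by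
  ext e
  simp only [mem_edgeFinset, edgeSet_fromEdgeSet, mem_union, mem_sdiff, Set.mem_sdiff,
    Set.mem_union, mem_coe]
  constructor
  · rintro ⟨⟨he | he, heB⟩, -⟩
    exacts [Or.inl ⟨he, heB⟩, Or.inr he]
  · rintro (⟨he, heB⟩ | he)
    · exact ⟨⟨Or.inl he, heB⟩, G.not_isDiag_of_mem_edgeSet he⟩
    · exact ⟨⟨Or.inr he, Finset.disjoint_left.mp hAB he⟩, hA e he⟩

variable [Fintype V]

theorem two_nsmul_sum_edgeFinset [DecidableEq V] (G : SimpleGraph V) [DecidableRel G.Adj]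
    [Fintype G.edgeSet] {M : Type*} [AddCommMonoid M] (f : Sym2 V → M) :
    2 • ∑ e ∈ G.edgeFinset, f e = ∑ d : G.Dart, f d.edge := by
  rw [← sum_fiberwise_of_maps_to (g := Dart.edge) (t := G.edgeFinset)
    (fun d _ ↦ mem_edgeFinset.mpr d.edge_mem), smul_sum]
  refine sum_congr rfl fun e he ↦ ?_
  rw [sum_congr rfl fun d hd ↦ congrArg f (mem_filter.mp hd).2, sum_const,
    G.dart_edge_fiber_card e (mem_edgeFinset.mp he)]

theorem dotProduct_adjMatrix_mulVec_eq_sum_darts (G : SimpleGraph V) [DecidableRel G.Adj]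
    (x : V → ℝ) : x ⬝ᵥ (G.adjMatrix ℝ *ᵥ x) = ∑ d : G.Dart, d.edge.mulEnds x := by
  have hdarts : ∑ d : G.Dart, d.edge.mulEnds x = ∑ p : V × V with G.Adj p.1 p.2, x p.1 * x p.2 :=
    sum_bij' (fun d _ ↦ (d.fst, d.snd)) (fun p h ↦ ⟨p, (mem_filter.1 h).2⟩) (by simp) (by simp)
      (by simp) (by simp) fun _ _ ↦ rfl
  simp only [hdarts, sum_filter, Fintype.sum_prod_type, dotProduct, mulVec, adjMatrix_apply,
    mul_sum, ite_mul, one_mul, zero_mul, mul_ite, mul_zero]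

theorem dotProduct_adjMatrix_mulVec_fromEdgeSet [DecidableEq V] (G : SimpleGraph V)
    [DecidableRel G.Adj] {A B : Finset (Sym2 V)} (hA : ∀ e ∈ A, ¬e.IsDiag)
    (hAG : Disjoint A G.edgeFinset) (hBG : B ⊆ G.edgeFinset)
    [DecidableRel (fromEdgeSet ((G.edgeSet ∪ A) \ B)).Adj] (x : V → ℝ) :
    x ⬝ᵥ ((fromEdgeSet ((G.edgeSet ∪ A) \ B)).adjMatrix ℝ *ᵥ x) =
      x ⬝ᵥ (G.adjMatrix ℝ *ᵥ x) + 2 * (∑ e ∈ A, e.mulEnds x - ∑ e ∈ B, e.mulEnds x) := by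
  have hAB : Disjoint A B := hAG.mono_right hBG
  rw [dotProduct_adjMatrix_mulVec_eq_sum_darts, dotProduct_adjMatrix_mulVec_eq_sum_darts,
    ← two_nsmul_sum_edgeFinset, ← two_nsmul_sum_edgeFinset,
    edgeFinset_fromEdgeSet_union_sdiff G hA hAB, sum_union (hAG.symm.mono_left sdiff_subset),
    sum_sdiff_eq_sub hBG, two_nsmul, two_nsmul]
  ring

theorem lam1_eq_sSup_spectrum [DecidableEq V] (G : SimpleGraph V) [DecidableRel G.Adj] :
    lam1 G = sSup (spectrum ℝ (G.adjMatrix ℝ)) := by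
  -- `lam1` uses the classical `DecidableRel` instance; `congr!` identifies the two matrices.
  simp_rw [lam1, Module.End.hasEigenvalue_iff_mem_spectrum, spectrum_toLin', Set.ofPred_mem_eq]
  congr!

theorem dotProduct_adjMatrix_mulVec_le_lam1 [DecidableEq V] (G : SimpleGraph V)
    [DecidableRel G.Adj] (y : V → ℝ) : y ⬝ᵥ (G.adjMatrix ℝ *ᵥ y) ≤ lam1 G * (y ⬝ᵥ y) := by
  refine (isHermitian_iff_isSymm.mpr G.isSymm_adjMatrix).dotProduct_mulVec_le_of_spectrum_le
    (fun μ hμ ↦ ?_) y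
  rw [lam1_eq_sSup_spectrum]
  exact le_csSup finite_real_spectrum.bddAbove hμ

end SimpleGraph

theorem stmt_3_general {V : Type*} [Fintype V] [DecidableEq V] (G : SimpleGraph V)
    [DecidableRel G.Adj] (x : V → ℝ)
    (hunit : ∑ v, x v ^ 2 = 1)
    (heig : G.adjMatrix ℝ *ᵥ x = lam1 G • x)
    (u u' v v' : V)
    (huv : u ≠ v)
    (hu'v' : u' ≠ v')
    (he1 : G.Adj u v') (he2 : G.Adj u' v)
    (hne1 : ¬ G.Adj u v) (hne2 : ¬ G.Adj u' v')
    (hxu : x u' ≤ x u) (hxv : x v' ≤ x v) :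
    lam1 (SimpleGraph.fromEdgeSet
      ((G.edgeSet ∪ {s(u, v), s(u', v')}) \ {s(u, v'), s(u', v)})) ≥ lam1 G := by
  classical
  set A : Finset (Sym2 V) := {s(u, v), s(u', v')}
  set B : Finset (Sym2 V) := {s(u, v'), s(u', v)}
  rw [← coe_pair, ← coe_pair]
  set G' := SimpleGraph.fromEdgeSet ((G.edgeSet ∪ A) \ B)
  have hxx : x ⬝ᵥ x = 1 := by simpa [dotProduct, ← pow_two] using hunit
  have hQG : x ⬝ᵥ (G.adjMatrix ℝ *ᵥ x) = lam1 G := by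
    rw [heig, dotProduct_smul, smul_eq_mul, hxx, mul_one]
  have hQG' : x ⬝ᵥ (G'.adjMatrix ℝ *ᵥ x) = lam1 G + 2 * ((x u - x u') * (x v - x v')) := by
    have huu' : u ≠ u' := fun h ↦ hne1 (h ▸ he2)
    rw [G.dotProduct_adjMatrix_mulVec_fromEdgeSet (by simp [A, huv, hu'v'])
      (by simp [A, disjoint_left, hne1, hne2]) (by simp [B, insert_subset_iff, he1, he2]),
      hQG, sum_pair (by simp [huu', he1.ne]), sum_pair (by simp [huu', huv])]
    simp only [Sym2.mulEnds_mk]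
    ring
  calc lam1 G ≤ lam1 G + 2 * ((x u - x u') * (x v - x v')) :=
        le_add_of_nonneg_right (mul_nonneg zero_le_two
          (mul_nonneg (sub_nonneg.mpr hxu) (sub_nonneg.mpr hxv)))
    _ = x ⬝ᵥ (G'.adjMatrix ℝ *ᵥ x) := hQG'.symm
    _ ≤ lam1 G' * (x ⬝ᵥ x) := G'.dotProduct_adjMatrix_mulVec_le_lam1 x
    _ = lam1 G' := by rw [hxx, mul_one]

theorem stmt_3 {V : Type*} [Fintype V] [DecidableEq V] (G : SimpleGraph V)
    [DecidableRel G.Adj] (hconn : G.Connected) (x : V → ℝ)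
    (hpos : ∀ w, 0 < x w)
    (hunit : ∑ v, x v ^ 2 = 1)
    (heig : G.adjMatrix ℝ *ᵥ x = lam1 G • x)
    (u u' v v' : V)
    (huu' : u ≠ u') (huv : u ≠ v) (huv' : u ≠ v') (hu'v : u' ≠ v)
    (hu'v' : u' ≠ v') (hvv' : v ≠ v')
    (he1 : G.Adj u v') (he2 : G.Adj u' v)
    (hne1 : ¬ G.Adj u v) (hne2 : ¬ G.Adj u' v')
    (hxu : x u' ≤ x u) (hxv : x v' ≤ x v) :
    lam1 (SimpleGraph.fromEdgeSet
      ((G.edgeSet ∪ {s(u, v), s(u', v')}) \ {s(u, v'), s(u', v)})) ≥ lam1 G :=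
  stmt_3_general G x hunit heig u u' v v' huv hu'v' he1 he2 hne1 hne2 hxu hxv
end

section
/- Let G be a connected graph with principal eigenvector x, let u and v be two vertices with x_v ≥ x_u, and let S be a nonempty subset of N(u) \ (N(v) ∪ {v}). Then the graph G' obtained by deleting all edges wu for w ∈ S and adding all edges wv for w ∈ S satisfies λ₁(G') > λ₁(G). -/
open Finset Matrix

/-!
Write `A`, `A'` for the adjacency matrices of `G` and of the rotated graph, `λ = λ₁(G)` and
`s = ∑_{w ∈ S} x_w > 0`. The rotation changes the quadratic form by
`xᵀA'x = xᵀAx + 2 (x_v - x_u) s ≥ λ xᵀx`. If we had `λ₁(G') ≤ λ`, then `λI - A'` would be positive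
semidefinite with `xᵀ(λI - A')x ≤ 0`, so `x` would lie in its kernel, i.e. be a `λ`-eigenvector
of `A'`. But `(A'x)_v = (Ax)_v + s = λ x_v + s`.
-/

namespace Matrix.IsHermitian

open scoped MatrixOrder

variable {n : Type*} [Fintype n] [DecidableEq n] {A : Matrix n n ℝ}

lemma posSemidef_smul_one_sub (hA : A.IsHermitian) {r : ℝ} (hr : ∀ μ ∈ spectrum ℝ A, μ ≤ r) :
    (r • 1 - A).PosSemidef := by
  simpa only [Matrix.le_iff, Algebra.algebraMap_eq_smul_one] using
    le_algebraMap_of_spectrum_le hr (ha := hA.isSelfAdjoint)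

lemma lt_sSup_spectrum (hA : A.IsHermitian) {r : ℝ} {x : n → ℝ}
    (hquad : r * (x ⬝ᵥ x) ≤ x ⬝ᵥ A *ᵥ x) (hx : A *ᵥ x ≠ r • x) :
    r < sSup (spectrum ℝ A) := by
  by_contra! hle
  have hB := hA.posSemidef_smul_one_sub fun μ hμ ↦
    (le_csSup A.finite_spectrum.bddAbove hμ).trans hle
  have hBx : x ⬝ᵥ (r • 1 - A) *ᵥ x = r * (x ⬝ᵥ x) - x ⬝ᵥ A *ᵥ x := by
    rw [sub_mulVec, smul_mulVec, one_mulVec, dotProduct_sub, dotProduct_smul, smul_eq_mul]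
  have hzero : x ⬝ᵥ (r • 1 - A) *ᵥ x = 0 :=
    le_antisymm (by linarith) (by simpa using hB.dotProduct_mulVec_nonneg x)
  have hker : (r • 1 - A) *ᵥ x = 0 := (hB.dotProduct_mulVec_zero_iff x).mp (by simpa using hzero)
  rw [sub_mulVec, smul_mulVec, one_mulVec, sub_eq_zero] at hker
  exact hx hker.symm

end Matrix.IsHermitian

lemma lam1_eq_sSup_spectrum {V : Type*} [Fintype V] [DecidableEq V] (G : SimpleGraph V)
    [DecidableRel G.Adj] : lam1 G = sSup (spectrum ℝ (G.adjMatrix ℝ)) := by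
  simp only [lam1, Module.End.hasEigenvalue_iff_mem_spectrum, spectrum_toLin', Set.ofPred_mem_eq]
  congr!

namespace SimpleGraph

variable {V : Type*} (G : SimpleGraph V)

def rotateEdges (S : Set V) (u v : V) : SimpleGraph V :=
  fromEdgeSet ((G.edgeSet \ {e | ∃ w ∈ S, e = s(w, u)}) ∪ {e | ∃ w ∈ S, e = s(w, v)})

variable {G}

lemma mk_mem_setOf_exists_eq_mk {S : Set V} {a b c : V} :
    s(a, b) ∈ {e | ∃ w ∈ S, e = s(w, c)} ↔ a ∈ S ∧ b = c ∨ b ∈ S ∧ a = c := by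
  simp only [Set.mem_ofPred_eq, Sym2.eq_iff]
  aesop

lemma rotateEdges_adj {S : Set V} {u v a b : V} :
    (G.rotateEdges S u v).Adj a b ↔
      G.Adj a b ∧ ¬(a ∈ S ∧ b = u ∨ b ∈ S ∧ a = u) ∨
        a ≠ b ∧ (a ∈ S ∧ b = v ∨ b ∈ S ∧ a = v) := by
  rw [rotateEdges, fromEdgeSet_adj, Set.mem_union, Set.mem_sdiff, mem_edgeSet,
    mk_mem_setOf_exists_eq_mk, mk_mem_setOf_exists_eq_mk]
  grind [G.ne_of_adj]

lemma adjMatrix_rotateEdges [DecidableEq V] [DecidableRel G.Adj] {α : Type*} [Ring α]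
    {S : Set V} {u v : V} [DecidableRel (G.rotateEdges S u v).Adj]
    (hS : S ⊆ G.neighborSet u \ (G.neighborSet v ∪ {v})) :
    (G.rotateEdges S u v).adjMatrix α = G.adjMatrix α
      + vecMulVec (S.indicator 1) (Pi.single v 1 - Pi.single u 1)
      + vecMulVec (Pi.single v 1 - Pi.single u 1) (S.indicator 1) := by
  classical
  have hu : ∀ w ∈ S, G.Adj u w := fun w hw ↦ (hS hw).1
  have hv : ∀ w ∈ S, ¬G.Adj v w := fun w hw h ↦ (hS hw).2 (Or.inl h)
  have hu' : ∀ w ∈ S, G.Adj w u := fun w hw ↦ (hu w hw).symm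
  have hv' : ∀ w ∈ S, ¬G.Adj w v := fun w hw h ↦ hv w hw h.symm
  have huS : u ∉ S := fun h ↦ G.loopless.irrefl u (hu u h)
  have hvS : v ∉ S := fun h ↦ (hS h).2 (Or.inr rfl)
  clear hS
  ext a b
  simp only [adjMatrix_apply, rotateEdges_adj, Matrix.add_apply, vecMulVec_apply, Pi.sub_apply,
    Pi.single_apply, Set.indicator_apply, Pi.one_apply]
  split_ifs <;> simp_all

lemma mulVec_adjMatrix_rotateEdges [DecidableEq V] [Fintype V] [DecidableRel G.Adj] {α : Type*}
    [CommRing α] {S : Set V} {u v : V} [DecidableRel (G.rotateEdges S u v).Adj]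
    (hS : S ⊆ G.neighborSet u \ (G.neighborSet v ∪ {v})) (x : V → α) :
    (G.rotateEdges S u v).adjMatrix α *ᵥ x = G.adjMatrix α *ᵥ x
      + (x v - x u) • S.indicator 1 + (S.indicator 1 ⬝ᵥ x) • (Pi.single v 1 - Pi.single u 1) := by
  rw [adjMatrix_rotateEdges hS, add_mulVec, add_mulVec, vecMulVec_mulVec, vecMulVec_mulVec,
    sub_dotProduct, single_dotProduct, single_dotProduct, one_mul, one_mul]
  simp only [op_smul_eq_smul]

lemma dotProduct_mulVec_adjMatrix_rotateEdges [DecidableEq V] [Fintype V] [DecidableRel G.Adj]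
    {α : Type*} [CommRing α] {S : Set V} {u v : V} [DecidableRel (G.rotateEdges S u v).Adj]
    (hS : S ⊆ G.neighborSet u \ (G.neighborSet v ∪ {v})) (x : V → α) :
    x ⬝ᵥ (G.rotateEdges S u v).adjMatrix α *ᵥ x =
      x ⬝ᵥ G.adjMatrix α *ᵥ x + 2 * (x v - x u) * (S.indicator 1 ⬝ᵥ x) := by
  rw [mulVec_adjMatrix_rotateEdges hS, dotProduct_add, dotProduct_add, dotProduct_smul,
    dotProduct_smul, dotProduct_sub, dotProduct_single, dotProduct_single,
    dotProduct_comm x (S.indicator 1), smul_eq_mul, smul_eq_mul]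
  ring

lemma mulVec_adjMatrix_rotateEdges_apply_right [DecidableEq V] [Fintype V] [DecidableRel G.Adj]
    {α : Type*} [CommRing α] {S : Set V} {u v : V} [DecidableRel (G.rotateEdges S u v).Adj]
    (hS : S ⊆ G.neighborSet u \ (G.neighborSet v ∪ {v})) (huv : u ≠ v) (x : V → α) :
    ((G.rotateEdges S u v).adjMatrix α *ᵥ x) v = (G.adjMatrix α *ᵥ x) v + S.indicator 1 ⬝ᵥ x := by
  have hvS : v ∉ S := fun h ↦ (hS h).2 (Or.inr rfl)
  rw [mulVec_adjMatrix_rotateEdges hS]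
  simp [hvS, huv.symm]

end SimpleGraph

theorem stmt_4_general {V : Type*} [Fintype V] [DecidableEq V] (G : SimpleGraph V)
    [DecidableRel G.Adj] (x : V → ℝ)
    (hpos : ∀ w, 0 < x w)
    (heig : G.adjMatrix ℝ *ᵥ x = lam1 G • x)
    (u v : V) (hxvu : x u ≤ x v)
    (S : Set V) (hS : S.Nonempty)
    (hSsub : S ⊆ G.neighborSet u \ (G.neighborSet v ∪ {v})) :
    lam1 (SimpleGraph.fromEdgeSet
      ((G.edgeSet \ {e | ∃ w ∈ S, e = s(w, u)}) ∪ {e | ∃ w ∈ S, e = s(w, v)}))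
      > lam1 G := by
  classical
  change lam1 G < lam1 (G.rotateEdges S u v)
  obtain ⟨w, hw⟩ := hS
  have huv : u ≠ v := fun h ↦ (hSsub hw).2 (Or.inl (h ▸ (hSsub hw).1))
  have hs : 0 < S.indicator 1 ⬝ᵥ x := by
    refine Finset.sum_pos' (fun i _ ↦ ?_) ⟨w, mem_univ w, ?_⟩
    · exact mul_nonneg (Set.indicator_nonneg (fun _ _ ↦ zero_le_one) i) (hpos i).le
    · simpa [Set.indicator_of_mem hw] using hpos w
  have hA' : ((G.rotateEdges S u v).adjMatrix ℝ).IsHermitian :=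
    isHermitian_iff_isSymm.mpr (SimpleGraph.isSymm_adjMatrix _)
  rw [lam1_eq_sSup_spectrum (G.rotateEdges S u v)]
  refine hA'.lt_sSup_spectrum (x := x) ?_ fun h ↦ ?_
  · rw [G.dotProduct_mulVec_adjMatrix_rotateEdges hSsub, heig, dotProduct_smul, smul_eq_mul]
    nlinarith
  · have hv := congrFun h v
    rw [G.mulVec_adjMatrix_rotateEdges_apply_right hSsub huv, heig] at hv
    simp only [Pi.smul_apply, smul_eq_mul] at hv
    linarith

theorem stmt_4 {V : Type*} [Fintype V] [DecidableEq V] (G : SimpleGraph V)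
    [DecidableRel G.Adj] (hconn : G.Connected) (x : V → ℝ)
    (hpos : ∀ w, 0 < x w)
    (hunit : ∑ v, x v ^ 2 = 1)
    (heig : G.adjMatrix ℝ *ᵥ x = lam1 G • x)
    (u v : V) (hxvu : x u ≤ x v)
    (S : Set V) (hS : S.Nonempty)
    (hSsub : S ⊆ G.neighborSet u \ (G.neighborSet v ∪ {v})) :
    lam1 (SimpleGraph.fromEdgeSet
      ((G.edgeSet \ {e | ∃ w ∈ S, e = s(w, u)}) ∪ {e | ∃ w ∈ S, e = s(w, v)}))
      > lam1 G :=
  stmt_4_general G x hpos heig u v hxvu S hS hSsub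
end

section
/- Let G be a connected irregular graph of order n, size m, and maximum degree Δ, and let x be a unit eigenvector of A(G) for λ₁(G) with minimum entry x_min. Then Δ − λ₁(G) ≥ (nΔ − 2m) x_min² + Σ_{uv ∈ E(G)} (x_u − x_v)², and the second summand is strictly positive. -/
open Finset Matrix

theorem stmt_7 {V : Type*} [Fintype V] [DecidableEq V] (G : SimpleGraph V)
    [DecidableRel G.Adj] (hconn : G.Connected)
    (hirr : ¬ ∃ d, G.IsRegularOfDegree d)
    (x : V → ℝ) (hpos : ∀ w, 0 < x w)
    (hunit : ∑ v, x v ^ 2 = 1)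
    (heig : G.adjMatrix ℝ *ᵥ x = lam1 G • x)
    (vm : V) (hmin : ∀ w, x vm ≤ x w) :
    (G.maxDegree : ℝ) - lam1 G ≥
        ((Fintype.card V : ℝ) * G.maxDegree - 2 * G.edgeFinset.card) * x vm ^ 2
          + (1 / 2) * ∑ u, ∑ v, (if G.Adj u v then (x u - x v) ^ 2 else 0) ∧
      0 < (1 / 2) * ∑ u, ∑ v, (if G.Adj u v then (x u - x v) ^ 2 else 0) := by
  classical
  set L := lam1 G with hLdef
  have hsum : ∀ u, ∑ v, (if G.Adj u v then x v else 0) = L * x u := by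
    intro u
    have h := congrFun heig u
    simpa [mulVec, dotProduct, SimpleGraph.adjMatrix_apply, ite_mul, one_mul, zero_mul] using h
  have hdegsum : ∀ (u : V) (f : V → ℝ),
      ∑ v, (if G.Adj u v then f v else 0) = ∑ v ∈ G.neighborFinset u, f v := by
    intro u f
    rw [SimpleGraph.neighborFinset_eq_filter, Finset.sum_filter]
  have hdeg1 : ∀ u, ∑ v, (if G.Adj u v then (1:ℝ) else 0) = (G.degree u : ℝ) := by
    intro u
    rw [hdegsum u (fun _ => (1:ℝ)), Finset.sum_const, SimpleGraph.card_neighborFinset_eq_degree]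
    simp
  set D : ℝ := ∑ v, (G.degree v : ℝ) * x v ^ 2 with hD
  set S2 : ℝ := ∑ u, ∑ v, (if G.Adj u v then (x u - x v) ^ 2 else 0) with hS2
  -- key identity : S2 = 2*D - 2*L
  have T1 : ∑ u, ∑ v, (if G.Adj u v then x u ^ 2 else 0) = D := by
    refine Finset.sum_congr rfl fun u _ => ?_
    have : ∑ v, (if G.Adj u v then x u ^ 2 else 0)
        = (∑ v, (if G.Adj u v then (1:ℝ) else 0)) * x u ^ 2 := by
      rw [Finset.sum_mul]
      refine Finset.sum_congr rfl fun v _ => ?_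
      by_cases h : G.Adj u v <;> simp [h]
    rw [this, hdeg1]
  have T2 : ∑ u, ∑ v, (if G.Adj u v then x v ^ 2 else 0) = D := by
    rw [Finset.sum_comm]
    refine Finset.sum_congr rfl fun v _ => ?_
    have : ∑ u, (if G.Adj u v then x v ^ 2 else 0)
        = ∑ u, (if G.Adj v u then x v ^ 2 else 0) := by
      exact Finset.sum_congr rfl fun u _ => if_congr (G.adj_comm u v) rfl rfl
    rw [this]
    have : ∑ u, (if G.Adj v u then x v ^ 2 else 0)
        = (∑ u, (if G.Adj v u then (1:ℝ) else 0)) * x v ^ 2 := by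
      rw [Finset.sum_mul]
      refine Finset.sum_congr rfl fun u _ => ?_
      by_cases h : G.Adj v u <;> simp [h]
    rw [this, hdeg1]
  have T3 : ∑ u, ∑ v, (if G.Adj u v then x u * x v else 0) = L := by
    have : ∀ u, ∑ v, (if G.Adj u v then x u * x v else 0) = L * (x u * x u) := by
      intro u
      have : ∑ v, (if G.Adj u v then x u * x v else 0)
          = x u * ∑ v, (if G.Adj u v then x v else 0) := by
        rw [Finset.mul_sum]
        refine Finset.sum_congr rfl fun v _ => ?_
        by_cases h : G.Adj u v <;> simp [h]
      rw [this, hsum]; ring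
    rw [Finset.sum_congr rfl fun u _ => this u, ← Finset.mul_sum]
    have : ∑ u, x u * x u = 1 := by
      rw [← hunit]; exact Finset.sum_congr rfl fun u _ => (sq (x u)).symm
    rw [this, mul_one]
  have key : S2 = 2 * D - 2 * L := by
    have expand : ∀ u v, (if G.Adj u v then (x u - x v) ^ 2 else 0)
        = (if G.Adj u v then x u ^ 2 else 0) + (if G.Adj u v then x v ^ 2 else 0)
          - 2 * (if G.Adj u v then x u * x v else 0) := by
      intro u v; by_cases h : G.Adj u v <;> simp [h]; ring
    calc S2 = ∑ u, ∑ v, ((if G.Adj u v then x u ^ 2 else 0)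
            + (if G.Adj u v then x v ^ 2 else 0)
            - 2 * (if G.Adj u v then x u * x v else 0)) := by
          rw [hS2]
          exact Finset.sum_congr rfl fun u _ => Finset.sum_congr rfl fun v _ => expand u v
      _ = (∑ u, ∑ v, (if G.Adj u v then x u ^ 2 else 0))
          + (∑ u, ∑ v, (if G.Adj u v then x v ^ 2 else 0))
          - 2 * ∑ u, ∑ v, (if G.Adj u v then x u * x v else 0) := by
          simp [Finset.sum_sub_distrib, Finset.sum_add_distrib, Finset.mul_sum]
      _ = 2 * D - 2 * L := by rw [T1, T2, T3]; ring
  -- handshake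
  have handshake : ∑ v, (G.degree v : ℝ) = 2 * G.edgeFinset.card := by
    have := G.sum_degrees_eq_twice_card_edges
    exact_mod_cast congrArg (fun n : ℕ => (n : ℝ)) this
  have hmaxdeg : ∀ v, (G.degree v : ℝ) ≤ (G.maxDegree : ℝ) := by
    intro v; exact_mod_cast G.degree_le_maxDegree v
  have hxm : 0 < x vm := hpos vm
  -- main inequality
  have hineq : (G.maxDegree : ℝ) - L ≥
      ((Fintype.card V : ℝ) * G.maxDegree - 2 * G.edgeFinset.card) * x vm ^ 2 + (1 / 2) * S2 := by
    have h1 : (1 / 2) * S2 = D - L := by rw [key]; ring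
    have h2 : (G.maxDegree : ℝ) = ∑ v, (G.maxDegree : ℝ) * x v ^ 2 := by
      rw [← Finset.mul_sum, hunit, mul_one]
    have h3 : ((Fintype.card V : ℝ) * G.maxDegree - 2 * G.edgeFinset.card)
        = ∑ v, ((G.maxDegree : ℝ) - G.degree v) := by
      rw [Finset.sum_sub_distrib, handshake, Finset.sum_const, Finset.card_univ, nsmul_eq_mul]
    have h4 : ∑ v, ((G.maxDegree : ℝ) - G.degree v) * x vm ^ 2
        ≤ ∑ v, ((G.maxDegree : ℝ) - G.degree v) * x v ^ 2 := by
      refine Finset.sum_le_sum fun v _ => ?_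
      refine mul_le_mul_of_nonneg_left ?_ (by linarith [hmaxdeg v])
      exact pow_le_pow_left₀ hxm.le (hmin v) 2
    have h5 : ∑ v, ((G.maxDegree : ℝ) - G.degree v) * x v ^ 2
        = (∑ v, (G.maxDegree : ℝ) * x v ^ 2) - D := by
      rw [hD, ← Finset.sum_sub_distrib]
      exact Finset.sum_congr rfl fun v _ => by ring
    rw [h1, h3, Finset.sum_mul]
    have := h4
    rw [h5, ← h2] at this
    linarith
  -- positivity
  have hS2nonneg : ∀ u ∈ (Finset.univ : Finset V), (0:ℝ) ≤ ∑ v, (if G.Adj u v then (x u - x v) ^ 2 else 0) := by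
    intro u _
    refine Finset.sum_nonneg fun v _ => ?_
    by_cases h : G.Adj u v <;> simp [h, sq_nonneg]
  have hS2pos : 0 < (1 / 2) * S2 := by
    rcases lt_or_eq_of_le (Finset.sum_nonneg hS2nonneg) with h | h
    · rw [hS2] at *; linarith
    · exfalso
      -- all edge terms vanish
      have hzero : ∀ u v, G.Adj u v → x u = x v := by
        intro u v huv
        have h1 := (Finset.sum_eq_zero_iff_of_nonneg hS2nonneg).mp h.symm u (Finset.mem_univ u)
        have h2 := (Finset.sum_eq_zero_iff_of_nonneg
          (fun v _ => by by_cases hh : G.Adj u v <;> simp [hh, sq_nonneg])).mp h1 v (Finset.mem_univ v)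
        rw [if_pos huv] at h2
        have := sq_eq_zero_iff.mp h2
        linarith
      have hconst : ∀ u v, x u = x v := by
        have hwalk : ∀ u v : V, ∀ p : G.Walk u v, x u = x v := by
          intro u v p
          induction p with
          | nil => rfl
          | cons h p ih => exact (hzero _ _ h).trans ih
        intro u v
        obtain ⟨p⟩ := (hconn.preconnected u v)
        exact hwalk u v p
      -- then all degrees equal L
      have hdegL : ∀ v, (G.degree v : ℝ) = L := by
        intro v
        have h1 : ∑ u, (if G.Adj v u then x u else 0) = (G.degree v : ℝ) * x v := by
          have : ∀ u, (if G.Adj v u then x u else 0) = (if G.Adj v u then (1:ℝ) else 0) * x v := by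
            intro u; by_cases h : G.Adj v u <;> simp [h, hconst u v]
          rw [Finset.sum_congr rfl fun u _ => this u, ← Finset.sum_mul, hdeg1]
        have h2 := hsum v
        rw [h1] at h2
        have := mul_right_cancel₀ (ne_of_gt (hpos v)) h2
        exact this
      apply hirr
      refine ⟨G.degree vm, fun v => ?_⟩
      have : (G.degree v : ℝ) = (G.degree vm : ℝ) := by rw [hdegL, hdegL]
      exact_mod_cast this
  exact ⟨hineq, hS2pos⟩
end

section
/- Let G be a k-connected graph on n vertices with maximum degree Δ, and let P₁,…,P_k be internally vertex-disjoint paths between two vertices u and v such that each P_i contains exactly one neighbor of u. Then Σ_{i=1}^{k} |V(P_i)| ≤ n + 3k − Δ − 2. -/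
open Finset

/-- A graph is `k`-connected if it has more than `k` vertices and removing any
set of fewer than `k` vertices leaves a connected graph. -/
def KConnected {V : Type*} [Fintype V] (G : SimpleGraph V) (k : ℕ) : Prop :=
  k < Fintype.card V ∧
    ∀ S : Finset V, S.card < k → ((⊤ : G.Subgraph).deleteVerts ↑S).coe.Connected

theorem stmt_9 {V : Type*} [Fintype V] [DecidableEq V] (G : SimpleGraph V)
    [DecidableRel G.Adj] (k : ℕ) (hk : 1 ≤ k) (hconn : KConnected G k)
    (u v : V) (huv : u ≠ v) (hdeg : G.degree u = G.maxDegree)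
    (P : Fin k → G.Walk u v) (hpath : ∀ i, (P i).IsPath)
    (hdisj : ∀ i j, i ≠ j →
      ∀ w, w ∈ (P i).support → w ∈ (P j).support → w = u ∨ w = v)
    (hnbr : ∀ i, ((P i).support.toFinset ∩ G.neighborFinset u).card = 1) :
    (∑ i, ((P i).support.length : ℤ)) ≤
      (Fintype.card V : ℤ) + 3 * k - G.maxDegree - 2 := by
  classical
  set S : Fin k → Finset V := fun i => (P i).support.toFinset with hSdef
  have hScard : ∀ i, (S i).card = (P i).support.length := fun i =>
    List.toFinset_card_of_nodup (hpath i).support_nodup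
  have huS : ∀ i, u ∈ S i := fun i => List.mem_toFinset.2 (P i).start_mem_support
  have hvS : ∀ i, v ∈ S i := fun i => List.mem_toFinset.2 (P i).end_mem_support
  set T : Fin k → Finset V := fun i => S i \ {u, v} with hTdef
  have hsub : ∀ i, ({u, v} : Finset V) ⊆ S i := by
    intro i x hx
    rcases Finset.mem_insert.1 hx with h | h
    · subst h; exact huS i
    · rw [Finset.mem_singleton.1 h]; exact hvS i
  have hcarduv : ({u, v} : Finset V).card = 2 := by
    rw [Finset.card_insert_of_notMem (by simpa using huv), Finset.card_singleton]
  have hTcard : ∀ i, (T i).card + 2 = (S i).card := fun i => by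
    rw [← hcarduv]; exact Finset.card_sdiff_add_card_eq_card (hsub i)
  have hTdisj : ∀ i j : Fin k, i ≠ j → Disjoint (T i) (T j) := by
    intro i j hij
    rw [Finset.disjoint_left]
    intro x hxi hxj
    simp only [hTdef, Finset.mem_sdiff, Finset.mem_insert, Finset.mem_singleton] at hxi hxj
    rcases hdisj i j hij x (List.mem_toFinset.1 hxi.1) (List.mem_toFinset.1 hxj.1) with h | h
    · exact hxi.2 (Or.inl h)
    · exact hxi.2 (Or.inr h)
  set UT := Finset.univ.biUnion T with hUTdef
  have hUTcard : UT.card = ∑ i, (T i).card :=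
    Finset.card_biUnion (fun i _ j _ hij => hTdisj i j hij)
  set U := Finset.univ.biUnion S with hUdef
  set N := G.neighborFinset u with hNdef
  -- at most k neighbors of u belong to the union of the paths
  have hNU : (N ∩ U).card ≤ k := by
    have heq : N ∩ U = Finset.univ.biUnion (fun i => S i ∩ N) := by
      ext x
      simp only [Finset.mem_inter, Finset.mem_biUnion, Finset.mem_univ, true_and, hUdef]
      tauto
    calc (N ∩ U).card ≤ ∑ i, (S i ∩ N).card := heq ▸ Finset.card_biUnion_le
      _ = ∑ i : Fin k, 1 := by
          refine Finset.sum_congr rfl fun i _ => ?_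
          exact hnbr i
      _ = k := by simp
  -- UT together with {u,v} fits inside U
  have hdisjUTuv : Disjoint UT ({u, v} : Finset V) := by
    rw [Finset.disjoint_left]
    intro x hx hx2
    rcases Finset.mem_biUnion.1 hx with ⟨i, _, hxi⟩
    exact (Finset.mem_sdiff.1 hxi).2 hx2
  have hAsub : UT ∪ {u, v} ⊆ U := by
    intro x hx
    rcases Finset.mem_union.1 hx with hx | hx
    · rcases Finset.mem_biUnion.1 hx with ⟨i, _, hxi⟩
      exact Finset.mem_biUnion.2 ⟨i, Finset.mem_univ i, (Finset.mem_sdiff.1 hxi).1⟩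
    · exact Finset.mem_biUnion.2 ⟨⟨0, hk⟩, Finset.mem_univ _, hsub ⟨0, hk⟩ hx⟩
  have hdisjA : Disjoint (UT ∪ {u, v}) (N \ U) :=
    Finset.disjoint_of_subset_left hAsub Finset.disjoint_sdiff
  have hbig : UT.card + 2 + (N \ U).card ≤ Fintype.card V := by
    calc UT.card + 2 + (N \ U).card
        = (UT ∪ {u, v}).card + (N \ U).card := by
          rw [Finset.card_union_of_disjoint hdisjUTuv, hcarduv]
      _ = ((UT ∪ {u, v}) ∪ (N \ U)).card := (Finset.card_union_of_disjoint hdisjA).symm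
      _ ≤ Fintype.card V := Finset.card_le_univ _
  have hNcard : N.card = G.maxDegree := by
    rw [hNdef, G.card_neighborFinset_eq_degree, hdeg]
  have hNsplit : (N ∩ U).card + (N \ U).card = N.card :=
    Finset.card_inter_add_card_sdiff N U
  have hsum : ∑ i, (S i).card = UT.card + 2 * k := by
    rw [hUTcard]
    calc ∑ i, (S i).card = ∑ i : Fin k, ((T i).card + 2) :=
          Finset.sum_congr rfl fun i _ => (hTcard i).symm
      _ = (∑ i, (T i).card) + 2 * k := by
          rw [Finset.sum_add_distrib]
          simp [mul_comm]
  have hgoal : ∑ i, (P i).support.length = UT.card + 2 * k := by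
    rw [← hsum]
    exact Finset.sum_congr rfl fun i _ => (hScard i).symm
  have hfin : (∑ i, ((P i).support.length : ℤ)) = (UT.card : ℤ) + 2 * k := by
    push_cast [← hgoal]
    norm_cast
  rw [hfin]
  have h1 : (UT.card : ℤ) + 2 + (N \ U).card ≤ (Fintype.card V : ℤ) := by
    exact_mod_cast hbig
  have h2 : ((N ∩ U).card : ℤ) + (N \ U).card = (G.maxDegree : ℤ) := by
    rw [← hNcard]; exact_mod_cast hNsplit
  have h3 : ((N ∩ U).card : ℤ) ≤ k := by exact_mod_cast hNU
  linarith
end
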